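/- Assume r* = s* (e.g. one of the equivalence conditions holds), and assume q(x) > 0 near every minimizer. Then r* = inf_{x∈S} p(x)/q(x) is attained at some point of S if and only if s* is attained at a minimizer (x₀*, x*) of the homogenized problem with x₀* ≠ 0; moreover in that case x*/x₀* is a minimizer of the original problem. -/

import Mathlib

/-!
Both directions are the scaling `xt = c • (1, x)`. For a positive scalar `c`, a homogeneous
polynomial of degree `k` scales by `c ^ k`, so the homogenized constraints at `c • (1, x)`
have the signs of the original constraints at `x`. Conversely `xt` with `xt 0 > 0` is such a
scaling of `(1, xt / xt 0)`, and the normalization `q̃ = 1` makes the objective value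
`p̃ (xt)` equal to the ratio `p / q` at `xt / xt 0`. In degree `0` scaling cannot normalize
`q̃`, but then `q̃` is constant, and it equals `1` because the homogenized feasible set is
nonempty (it has a real infimum).
-/

open MvPolynomial

namespace MvPolynomial.IsHomogeneous

theorem eval_smul {σ R : Type*} [CommSemiring R] {P : MvPolynomial σ R} {d : ℕ}
    (hP : P.IsHomogeneous d) (c : R) (x : σ → R) :
    eval (c • x) P = c ^ d * eval x P := by
  rw [eval_eq, eval_eq, Finset.mul_sum]
  refine Finset.sum_congr rfl fun m hm => ?_
  simp only [Pi.smul_apply, smul_eq_mul, mul_pow, Finset.prod_mul_distrib,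
    Finset.prod_pow_eq_pow_sum, ← hP.degree_eq_sum_deg_support hm]
  ring

theorem eval_eq_of_degree_eq_zero {σ R : Type*} [CommSemiring R] {P : MvPolynomial σ R}
    (hP : P.IsHomogeneous 0) (x y : σ → R) : eval x P = eval y P := by
  have h := fun z => hP.eval_smul 0 z
  simp only [zero_smul, pow_zero, one_mul] at h
  rw [← h x, ← h y]

theorem exists_pos_eval_smul_eq_one {σ : Type*} {Q : MvPolynomial σ ℝ} {d : ℕ}
    (hQ : Q.IsHomogeneous d) {x y : σ → ℝ} (hy : eval y Q = 1) (hx : 0 < eval x Q) :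
    ∃ c : ℝ, 0 < c ∧ eval (c • x) Q = 1 := by
  rcases eq_or_ne d 0 with rfl | hd
  · exact ⟨1, one_pos, by rw [one_smul, hQ.eval_eq_of_degree_eq_zero x y, hy]⟩
  · refine ⟨(eval x Q)⁻¹ ^ (d⁻¹ : ℝ), by positivity, ?_⟩
    rw [hQ.eval_smul, Real.rpow_inv_natCast_pow (inv_nonneg.mpr hx.le) hd,
      inv_mul_cancel₀ hx.ne']

end MvPolynomial.IsHomogeneous

theorem Fin.smul_cons_one_div_eq {K : Type*} [Field K] {n : ℕ} (xt : Fin (n + 1) → K)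
    (h0 : xt 0 ≠ 0) :
    xt 0 • (Fin.cons 1 (fun i : Fin n => xt i.succ / xt 0) : Fin (n + 1) → K) = xt := by
  ext j
  refine Fin.cases ?_ (fun i => ?_) j
  · simp
  · simp [mul_div_cancel₀ _ h0]

theorem eval_smul_cons_one_of_isHomogeneous {R : Type*} [CommSemiring R] {n d : ℕ}
    {P : MvPolynomial (Fin (n + 1)) R} {p : MvPolynomial (Fin n) R} (hP : P.IsHomogeneous d)
    (hP1 : ∀ x, eval (Fin.cons 1 x) P = eval x p) (c : R) (x : Fin n → R) :
    eval (c • Fin.cons 1 x) P = c ^ d * eval x p := by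
  rw [hP.eval_smul, hP1]

theorem attained_iff_homogenized_attained_off_hyperplane_general
    (n m₁ m₂ : ℕ)
    (p q : MvPolynomial (Fin n) ℝ)
    (h : Fin m₁ → MvPolynomial (Fin n) ℝ) (g : Fin m₂ → MvPolynomial (Fin n) ℝ)
    (d : ℕ)
    (P Q : MvPolynomial (Fin (n + 1)) ℝ)
    (hP : P.IsHomogeneous d)
    (hP1 : ∀ x : Fin n → ℝ, eval (Fin.cons 1 x) P = eval x p)
    (hQ : Q.IsHomogeneous d)
    (hQ1 : ∀ x : Fin n → ℝ, eval (Fin.cons 1 x) Q = eval x q)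
    (Hh : Fin m₁ → MvPolynomial (Fin (n + 1)) ℝ)
    (Hg : Fin m₂ → MvPolynomial (Fin (n + 1)) ℝ)
    (hHh : ∀ i, (Hh i).IsHomogeneous (h i).totalDegree)
    (hHh1 : ∀ i, ∀ x : Fin n → ℝ, eval (Fin.cons 1 x) (Hh i) = eval x (h i))
    (hHg : ∀ j, (Hg j).IsHomogeneous (g j).totalDegree)
    (hHg1 : ∀ j, ∀ x : Fin n → ℝ, eval (Fin.cons 1 x) (Hg j) = eval x (g j))
    (rfeas : (Fin n → ℝ) → Prop)
    (hrfeas : ∀ x, rfeas x ↔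
      (∀ i, eval x (h i) = 0) ∧ (∀ j, 0 ≤ eval x (g j)) ∧ 0 < eval x q)
    (sfeas : (Fin (n + 1) → ℝ) → Prop)
    (hsfeas : ∀ xt, sfeas xt ↔
      (∀ i, eval xt (Hh i) = 0) ∧ eval xt Q = 1 ∧
        (∀ j, 0 ≤ eval xt (Hg j)) ∧ 0 ≤ xt 0)
    (ρ : ℝ)
    (hs : IsGLB {v : ℝ | ∃ xt, sfeas xt ∧ v = eval xt P} ρ) :
    ((∃ x, rfeas x ∧ eval x p / eval x q = ρ) ↔
      (∃ xt, sfeas xt ∧ xt 0 ≠ 0 ∧ eval xt P = ρ)) ∧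
    (∀ xt, sfeas xt → xt 0 ≠ 0 → eval xt P = ρ →
      rfeas (fun i : Fin n => xt i.succ / xt 0) ∧
        eval (fun i : Fin n => xt i.succ / xt 0) p /
          eval (fun i : Fin n => xt i.succ / xt 0) q = ρ) := by
  have scaled : ∀ (c : ℝ) (x : Fin n → ℝ), 0 < c →
      eval (c • (Fin.cons 1 x : Fin (n + 1) → ℝ)) Q = 1 →
      (sfeas (c • Fin.cons 1 x) ↔ rfeas x) ∧
        eval (c • (Fin.cons 1 x : Fin (n + 1) → ℝ)) P = eval x p / eval x q := by
    intro c x hc hcQ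
    have hcd : 0 < c ^ d := pow_pos hc d
    rw [eval_smul_cons_one_of_isHomogeneous hQ hQ1] at hcQ
    have hq : 0 < eval x q := pos_of_mul_pos_right (hcQ ▸ one_pos) hcd.le
    refine ⟨?_, ?_⟩
    · simp [hsfeas, hrfeas, eval_smul_cons_one_of_isHomogeneous hQ hQ1,
        eval_smul_cons_one_of_isHomogeneous (hHh _) (hHh1 _),
        eval_smul_cons_one_of_isHomogeneous (hHg _) (hHg1 _),
        hcQ, hq, hc.le, hc.ne', mul_nonneg_iff_of_pos_left, pow_pos hc]
    · rw [eval_smul_cons_one_of_isHomogeneous hP hP1, eq_div_iff hq.ne']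
      linear_combination eval x p * hcQ
  have dehomogenize : ∀ xt, sfeas xt → xt 0 ≠ 0 →
      rfeas (fun i : Fin n => xt i.succ / xt 0) ∧
        eval (fun i : Fin n => xt i.succ / xt 0) p /
          eval (fun i : Fin n => xt i.succ / xt 0) q = eval xt P := by
    intro xt hxt h0
    have hxt0 : 0 < xt 0 := ((hsfeas xt).mp hxt).2.2.2.lt_of_ne' h0
    have hQxt : eval xt Q = 1 := ((hsfeas xt).mp hxt).2.1
    set x : Fin n → ℝ := fun i => xt i.succ / xt 0
    have hxt_eq : xt 0 • (Fin.cons 1 x : Fin (n + 1) → ℝ) = xt :=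
      Fin.smul_cons_one_div_eq xt h0
    obtain ⟨hfeas, hval⟩ := scaled _ _ hxt0 (hxt_eq ▸ hQxt)
    rw [hxt_eq] at hfeas hval
    exact ⟨hfeas.mp hxt, hval.symm⟩
  refine ⟨⟨?_, ?_⟩, fun xt hxt h0 hval => hval ▸ dehomogenize xt hxt h0⟩
  · rintro ⟨x, hx, rfl⟩
    obtain ⟨-, y, hy, -⟩ := hs.nonempty
    obtain ⟨c, hc, hcQ⟩ :=
      hQ.exists_pos_eval_smul_eq_one ((hsfeas y).mp hy).2.1 (x := Fin.cons 1 x)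
        (by rw [hQ1]; exact ((hrfeas x).mp hx).2.2)
    obtain ⟨hfeas, hval⟩ := scaled c x hc hcQ
    exact ⟨_, hfeas.mpr hx, by simpa using hc.ne', hval⟩
  · rintro ⟨xt, hxt, h0, rfl⟩
    exact ⟨_, dehomogenize xt hxt h0⟩

/-- assuming `r* = s* = ρ` (both greatest lower bounds) and `q > 0`
at the relevant points, `r*` is attained iff `s*` is attained at a minimizer
`(x₀*, x*)` with `x₀* ≠ 0`; moreover in that case `x*/x₀*` is a minimizer of the
original problem. -/
theorem attained_iff_homogenized_attained_off_hyperplane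
    (n m₁ m₂ : ℕ)
    (p q : MvPolynomial (Fin n) ℝ)
    (h : Fin m₁ → MvPolynomial (Fin n) ℝ) (g : Fin m₂ → MvPolynomial (Fin n) ℝ)
    (d : ℕ) (hd : d = max p.totalDegree q.totalDegree)
    (P Q : MvPolynomial (Fin (n + 1)) ℝ)
    (hP : P.IsHomogeneous d)
    (hP1 : ∀ x : Fin n → ℝ, eval (Fin.cons 1 x) P = eval x p)
    (hQ : Q.IsHomogeneous d)
    (hQ1 : ∀ x : Fin n → ℝ, eval (Fin.cons 1 x) Q = eval x q)
    (Hh : Fin m₁ → MvPolynomial (Fin (n + 1)) ℝ)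
    (Hg : Fin m₂ → MvPolynomial (Fin (n + 1)) ℝ)
    (hHh : ∀ i, (Hh i).IsHomogeneous (h i).totalDegree)
    (hHh1 : ∀ i, ∀ x : Fin n → ℝ, eval (Fin.cons 1 x) (Hh i) = eval x (h i))
    (hHg : ∀ j, (Hg j).IsHomogeneous (g j).totalDegree)
    (hHg1 : ∀ j, ∀ x : Fin n → ℝ, eval (Fin.cons 1 x) (Hg j) = eval x (g j))
    (rfeas : (Fin n → ℝ) → Prop)
    (hrfeas : ∀ x, rfeas x ↔
      (∀ i, eval x (h i) = 0) ∧ (∀ j, 0 ≤ eval x (g j)) ∧ 0 < eval x q)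
    (sfeas : (Fin (n + 1) → ℝ) → Prop)
    (hsfeas : ∀ xt, sfeas xt ↔
      (∀ i, eval xt (Hh i) = 0) ∧ eval xt Q = 1 ∧
        (∀ j, 0 ≤ eval xt (Hg j)) ∧ 0 ≤ xt 0)
    (ρ : ℝ)
    (hr : IsGLB {v : ℝ | ∃ x, rfeas x ∧ v = eval x p / eval x q} ρ)
    (hs : IsGLB {v : ℝ | ∃ xt, sfeas xt ∧ v = eval xt P} ρ) :
    ((∃ x, rfeas x ∧ eval x p / eval x q = ρ) ↔
      (∃ xt, sfeas xt ∧ xt 0 ≠ 0 ∧ eval xt P = ρ)) ∧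
    (∀ xt, sfeas xt → xt 0 ≠ 0 → eval xt P = ρ →
      rfeas (fun i : Fin n => xt i.succ / xt 0) ∧
        eval (fun i : Fin n => xt i.succ / xt 0) p /
          eval (fun i : Fin n => xt i.succ / xt 0) q = ρ) :=
  attained_iff_homogenized_attained_off_hyperplane_general n m₁ m₂ p q h g d P Q hP hP1 hQ hQ1 Hh Hg
    hHh hHh1 hHg hHg1 rfeas hrfeas sfeas hsfeas ρ hs
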